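/- arXiv:math/0303076 — 2 statements merged into one kernel-verified Lean document; each statement's English description precedes it below -/
import Mathlib

section
/- Let X be a pointed space and s₁ : X → ΩΣX the adjoint of the identity on ΣX (i.e., s₁(x) is the loop t ↦ [x,t]). Define s_n : Xⁿ → ΩΣX by s_n(x₁,…,x_n) = (⋯(s₁(x₁)·s₁(x₂))⋯)·s₁(x_n) using a loop multiplication on ΩΣX for which the constant loop is a strict unit. Then (s_n)_{n≥1} is a compatible sequence of invariant maps and hence induces a continuous map s : J(X) → ΩΣX. -/
open scoped unitInterval
noncomputable section
universe u v

variable {X : Type u} [TopologicalSpace X]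

/-- Free (unbased) homotopy between bare functions. -/
def Homotopic {A : Type*} {Z : Type*} [TopologicalSpace A] [TopologicalSpace Z]
    (f g : A → Z) : Prop :=
  ∃ H : unitInterval × A → Z,
    Continuous H ∧ (∀ a, H (0, a) = f a) ∧ ∀ a, H (1, a) = g a

def IsHomotopyEquiv {A B : Type*} [TopologicalSpace A] [TopologicalSpace B] (f : A → B) : Prop :=
  Continuous f ∧ ∃ g : B → A, Continuous g ∧
    Homotopic (fun a => g (f a)) id ∧ Homotopic (fun b => f (g b)) id

/-! ### James reduced product -/

open Classical in
/-- Delete all basepoint entries from a list. -/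
def jreduce (x0 : X) (l : List X) : List X := l.filter fun x => decide (x ≠ x0)

def JamesSetoid (x0 : X) : Setoid (List X) where
  r l l' := jreduce x0 l = jreduce x0 l'
  iseqv := ⟨fun _ => rfl, Eq.symm, Eq.trans⟩

/-- The James reduced product `J(X)`, with the quotient topology. -/
def James (x0 : X) : Type u := Quotient (JamesSetoid x0)

instance (x0 : X) : TopologicalSpace (James x0) :=
  inferInstanceAs (TopologicalSpace (Quotient (JamesSetoid x0)))

def James.mk (x0 : X) (l : List X) : James x0 := Quotient.mk (JamesSetoid x0) l

def James.pt (x0 : X) : James x0 := James.mk x0 []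

/-- The canonical map `ν_n : Xⁿ → J(X)`. -/
def nu (x0 : X) (n : ℕ) (v : Fin n → X) : James x0 := James.mk x0 (List.ofFn v)

/-- Concatenation product on `J(X)`. -/
def James.mul {x0 : X} (a b : James x0) : James x0 :=
  Quotient.liftOn₂ a b (fun l l' => James.mk x0 (l ++ l')) (by
    intro l1 l2 l1' l2' h1 h2
    apply Quotient.sound
    show jreduce x0 _ = jreduce x0 _
    have h1' : jreduce x0 l1 = jreduce x0 l1' := h1
    have h2' : jreduce x0 l2 = jreduce x0 l2' := h2
    simp only [jreduce, List.filter_append]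
    unfold jreduce at h1' h2'
    rw [h1', h2'])

/-! ### Reduced suspension -/

def suspCollapsed (x0 : X) (p : X × I) : Prop := p.2 = 0 ∨ p.2 = 1 ∨ p.1 = x0

def SuspSetoid (x0 : X) : Setoid (X × I) where
  r p q := p = q ∨ (suspCollapsed x0 p ∧ suspCollapsed x0 q)
  iseqv := by
    refine ⟨fun _ => Or.inl rfl, ?_, ?_⟩
    · rintro p q (rfl | ⟨h1, h2⟩)
      exacts [Or.inl rfl, Or.inr ⟨h2, h1⟩]
    · rintro p q r (rfl | ⟨h1, h2⟩) (rfl | ⟨h3, h4⟩)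
      exacts [Or.inl rfl, Or.inr ⟨h3, h4⟩, Or.inr ⟨h1, h2⟩, Or.inr ⟨h1, h4⟩]

/-- The reduced suspension `ΣX`. -/
def Susp (x0 : X) : Type u := Quotient (SuspSetoid x0)

instance (x0 : X) : TopologicalSpace (Susp x0) :=
  inferInstanceAs (TopologicalSpace (Quotient (SuspSetoid x0)))

def Susp.mk (x0 : X) (x : X) (t : I) : Susp x0 := Quotient.mk (SuspSetoid x0) (x, t)

def Susp.pt (x0 : X) : Susp x0 := Susp.mk x0 x0 0

open Classical in
/-- Suspension of a (pointed) map. -/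
def suspMap {Y : Type v} [TopologicalSpace Y] {x0 : X} (y0 : Y) (f : X → Y) :
    Susp x0 → Susp y0 := fun a =>
  Quotient.liftOn a
    (fun p => if suspCollapsed x0 p then Susp.pt y0 else Susp.mk y0 (f p.1) p.2)
    (by
      rintro p q (rfl | ⟨h1, h2⟩)
      · rfl
      · simp [h1, h2])

open Classical in
/-- Co-H sum of two maps out of a suspension (along the suspension coordinate). -/
def coHSum {x0 : X} {Z : Type v} [TopologicalSpace Z] (f g : Susp x0 → Z) :
    Susp x0 → Z := fun a =>
  Quotient.liftOn a
    (fun p =>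
      if suspCollapsed x0 p then f (Susp.pt x0)
      else if h : (p.2 : ℝ) ≤ 1 / 2 then
        f (Susp.mk x0 p.1 ⟨2 * (p.2 : ℝ), Set.mem_Icc.mpr ⟨by linarith [p.2.2.1], by linarith⟩⟩)
      else g (Susp.mk x0 p.1
        ⟨2 * (p.2 : ℝ) - 1, Set.mem_Icc.mpr ⟨by linarith [not_le.mp h], by linarith [p.2.2.2]⟩⟩))
    (by
      rintro p q (rfl | ⟨h1, h2⟩)
      · rfl
      · simp [h1, h2])

open Classical in
/-- Co-H inverse of a map out of a suspension. -/
def coHNeg {x0 : X} {Z : Type v} [TopologicalSpace Z] (f : Susp x0 → Z) :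
    Susp x0 → Z := fun a =>
  Quotient.liftOn a
    (fun p => if suspCollapsed x0 p then f (Susp.pt x0)
      else f (Susp.mk x0 p.1 (unitInterval.symm p.2)))
    (by
      rintro p q (rfl | ⟨h1, h2⟩)
      · rfl
      · simp [h1, h2])

/-- `s₁ : X → ΩΣX`, the adjoint of the identity of `ΣX`. -/
def sOne (x0 : X) (x : X) : Path (Susp.pt x0) (Susp.pt x0) where
  toFun t := Susp.mk x0 x t
  continuous_toFun := by
    exact Continuous.comp continuous_quotient_mk' (Continuous.prodMk continuous_const continuous_id)
  source' := Quotient.sound (Or.inr ⟨Or.inl rfl, Or.inl rfl⟩)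
  target' := Quotient.sound (Or.inr ⟨Or.inr (Or.inl rfl), Or.inl rfl⟩)

lemma collapsed_eval (x0 : X) (p : Path (Susp.pt x0) (Susp.pt x0) × I)
    (h : suspCollapsed (Path.refl (Susp.pt x0)) p) : p.1 p.2 = Susp.pt x0 := by
  rcases h with h | h | h
  · rw [h]; exact p.1.source
  · rw [h]; exact p.1.target
  · rw [h]; rfl

/-- The evaluation map `e : ΣΩΣX → ΣX`. -/
def evalMap (x0 : X) : Susp (Path.refl (Susp.pt x0)) → Susp x0 := fun a =>
  Quotient.liftOn a (fun p => p.1 p.2)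
    (by
      rintro p q (rfl | ⟨h1, h2⟩)
      · rfl
      · show p.1 p.2 = q.1 q.2
        rw [collapsed_eval x0 p h1, collapsed_eval x0 q h2])

/-! ### Smash product -/

def smashCollapsed {Y : Type v} (x0 : X) (y0 : Y) (p : X × Y) : Prop :=
  p.1 = x0 ∨ p.2 = y0

def SmashSetoid {Y : Type v} [TopologicalSpace Y] (x0 : X) (y0 : Y) : Setoid (X × Y) where
  r p q := p = q ∨ (smashCollapsed x0 y0 p ∧ smashCollapsed x0 y0 q)
  iseqv := by
    refine ⟨fun _ => Or.inl rfl, ?_, ?_⟩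
    · rintro p q (rfl | ⟨h1, h2⟩)
      exacts [Or.inl rfl, Or.inr ⟨h2, h1⟩]
    · rintro p q r (rfl | ⟨h1, h2⟩) (rfl | ⟨h3, h4⟩)
      exacts [Or.inl rfl, Or.inr ⟨h3, h4⟩, Or.inr ⟨h1, h2⟩, Or.inr ⟨h1, h4⟩]

/-- The smash product `X ∧ Y`. -/
def Smash' {Y : Type v} [TopologicalSpace Y] (x0 : X) (y0 : Y) : Type max u v :=
  Quotient (SmashSetoid x0 y0)

instance {Y : Type v} [TopologicalSpace Y] (x0 : X) (y0 : Y) :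
    TopologicalSpace (Smash' x0 y0) :=
  inferInstanceAs (TopologicalSpace (Quotient (SmashSetoid x0 y0)))

def Smash'.mk {Y : Type v} [TopologicalSpace Y] (x0 : X) (y0 : Y) (p : X × Y) :
    Smash' x0 y0 := Quotient.mk (SmashSetoid x0 y0) p

def Smash'.pt {Y : Type v} [TopologicalSpace Y] (x0 : X) (y0 : Y) : Smash' x0 y0 :=
  Smash'.mk x0 y0 (x0, y0)

end

/-!
The loop `s₁(x₀)` is constant and the constant loop is a strict right unit, so the left-normed
product of `s₁(x₁), …, s₁(xₙ)` is unchanged when basepoint letters are deleted from the word: it is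
constant on the fibres of `List X → J(X)`. Since `J(X)` carries the quotient topology, continuity of
the induced map reduces to continuity on `List X`, where the product is an iterated fold of the
continuous map `(γ, x) ↦ γ · s₁(x)`.
-/

open Filter Topology

namespace List

variable {α Z W : Type*}

theorem filter_ofFn_insertNth {p : α → Bool} {a : α} (ha : p a = false) {n : ℕ}
    (i : Fin (n + 1)) (v : Fin n → α) :
    (ofFn (i.insertNth a v)).filter p = (ofFn v).filter p := by
  induction n with
  | zero => simp [Fin.fin_one_eq_zero i, Fin.insertNth_zero', ha]
  | succ n ih =>
    induction i using Fin.cases with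
    | zero => simp [Fin.insertNth_zero', ha]
    | succ j =>
      rw [← Fin.cons_self_tail v, Fin.insertNth_succ_cons, ofFn_cons, ofFn_cons,
        filter_cons, filter_cons, ih]

theorem nhds_cons_eq_map [TopologicalSpace α] (a : α) (l : List α) :
    𝓝 (a :: l) = Filter.map (fun p : α × List α => p.1 :: p.2) (𝓝 a ×ˢ 𝓝 l) :=
  le_antisymm (tendsto_id'.mp (tendsto_cons_iff.mpr tendsto_map)) tendsto_cons

theorem continuous_foldl [TopologicalSpace Z] [TopologicalSpace W] {f : Z → W → Z}
    (hf : Continuous fun p : Z × W => f p.1 p.2) :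
    Continuous fun p : Z × List W => p.2.foldl f p.1 := by
  refine continuous_iff_continuousAt.mpr fun ⟨z, l⟩ => ?_
  induction l generalizing z with
  | nil =>
    rw [ContinuousAt, nhds_prod_eq, nhds_nil, prod_pure, tendsto_map'_iff]
    exact tendsto_id
  | cons w l ih =>
    have hstep : Tendsto (fun q : Z × W × List W => (f q.1 q.2.1, q.2.2))
        (𝓝 z ×ˢ (𝓝 w ×ˢ 𝓝 l)) (𝓝 (f z w, l)) := by
      rw [← nhds_prod_eq, ← nhds_prod_eq]
      exact ((hf.comp (continuous_fst.prodMk continuous_snd.fst)).prodMk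
        continuous_snd.snd).continuousAt
    rw [ContinuousAt, nhds_prod_eq, nhds_cons_eq_map, prod_map_right, tendsto_map'_iff]
    exact ((ih (f z w)).tendsto.comp hstep :)

end List

theorem jreduce_ofFn_insertNth {X : Type*} (x0 : X) {n : ℕ} (i : Fin (n + 1)) (v : Fin n → X) :
    jreduce x0 (List.ofFn (i.insertNth x0 v)) = jreduce x0 (List.ofFn v) :=
  List.filter_ofFn_insertNth (by simp) i v

section LoopProducts

variable {X : Type*} [TopologicalSpace X] (x0 : X)

theorem sOne_self : sOne x0 x0 = Path.refl (Susp.pt x0) := by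
  ext t
  exact Quotient.sound (Or.inr ⟨Or.inr (Or.inr rfl), Or.inl rfl⟩)

theorem continuous_sOne : Continuous (sOne x0) := by
  rw [← Path.continuous_uncurry_iff]
  exact continuous_quotient_mk'

variable {x0}
variable {lm : Path (Susp.pt x0) (Susp.pt x0) → Path (Susp.pt x0) (Susp.pt x0) →
  Path (Susp.pt x0) (Susp.pt x0)}

theorem foldl_map_sOne_jreduce (hre : ∀ γ, lm γ (Path.refl (Susp.pt x0)) = γ) (l : List X)
    (γ : Path (Susp.pt x0) (Susp.pt x0)) :
    ((jreduce x0 l).map (sOne x0)).foldl lm γ = (l.map (sOne x0)).foldl lm γ := by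
  simp only [jreduce, List.foldl_map, List.foldl_filter]
  congr with δ x
  split_ifs with hx
  · rfl
  · obtain rfl : x = x0 := by simpa using hx
    rw [sOne_self, hre]

theorem continuous_foldl_map_sOne
    (hlm : Continuous fun p : Path (Susp.pt x0) (Susp.pt x0) × Path (Susp.pt x0) (Susp.pt x0) =>
      lm p.1 p.2)
    (γ : Path (Susp.pt x0) (Susp.pt x0)) :
    Continuous fun l : List X => (l.map (sOne x0)).foldl lm γ := by
  have hstep : Continuous fun p : Path (Susp.pt x0) (Susp.pt x0) × X => lm p.1 (sOne x0 p.2) :=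
    hlm.comp (continuous_fst.prodMk ((continuous_sOne x0).comp continuous_snd))
  simp only [List.foldl_map]
  exact (List.continuous_foldl hstep).comp (continuous_const.prodMk continuous_id)

end LoopProducts

theorem sSeq_compatible_invariant_general {X : Type u} [TopologicalSpace X] (x0 : X)
    (lm : Path (Susp.pt x0) (Susp.pt x0) → Path (Susp.pt x0) (Susp.pt x0) →
      Path (Susp.pt x0) (Susp.pt x0))
    (hlm : Continuous fun p : Path (Susp.pt x0) (Susp.pt x0) × Path (Susp.pt x0) (Susp.pt x0) =>
      lm p.1 p.2)
    (hre : ∀ γ, lm γ (Path.refl (Susp.pt x0)) = γ) :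
    (∀ (n : ℕ) (i : Fin (n + 1)) (v : Fin n → X),
        ((List.ofFn (i.insertNth x0 v)).map (sOne x0)).foldl lm (Path.refl (Susp.pt x0)) =
          ((List.ofFn v).map (sOne x0)).foldl lm (Path.refl (Susp.pt x0))) ∧
      ∃ s : James x0 → Path (Susp.pt x0) (Susp.pt x0), Continuous s ∧
        ∀ l : List X,
          s (James.mk x0 l) = (l.map (sOne x0)).foldl lm (Path.refl (Susp.pt x0)) := by
  have invariant {l l' : List X} (h : jreduce x0 l = jreduce x0 l') :
      (l.map (sOne x0)).foldl lm (Path.refl (Susp.pt x0)) =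
        (l'.map (sOne x0)).foldl lm (Path.refl (Susp.pt x0)) := by
    rw [← foldl_map_sOne_jreduce hre, h, foldl_map_sOne_jreduce hre]
  refine ⟨fun n i v => invariant (jreduce_ofFn_insertNth x0 i v), ?_⟩
  exact ⟨Quotient.lift _ fun _ _ => invariant,
    (continuous_foldl_map_sOne hlm _).quotient_lift _, fun _ => rfl⟩

/-- the left-normed loop products `s_n` of `s₁` (with respect to a strictly
unital loop multiplication on `ΩΣX`) form a compatible sequence of invariant maps and
induce `s : J(X) → ΩΣX`. -/
theorem sSeq_compatible_invariant {X : Type u} [TopologicalSpace X] (x0 : X)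
    (lm : Path (Susp.pt x0) (Susp.pt x0) → Path (Susp.pt x0) (Susp.pt x0) →
      Path (Susp.pt x0) (Susp.pt x0))
    (hlm : Continuous fun p : Path (Susp.pt x0) (Susp.pt x0) × Path (Susp.pt x0) (Susp.pt x0) =>
      lm p.1 p.2)
    (hle : ∀ γ, lm (Path.refl (Susp.pt x0)) γ = γ)
    (hre : ∀ γ, lm γ (Path.refl (Susp.pt x0)) = γ) :
    (∀ (n : ℕ) (i : Fin (n + 1)) (v : Fin n → X),
        ((List.ofFn (i.insertNth x0 v)).map (sOne x0)).foldl lm (Path.refl (Susp.pt x0)) =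
          ((List.ofFn v).map (sOne x0)).foldl lm (Path.refl (Susp.pt x0))) ∧
      ∃ s : James x0 → Path (Susp.pt x0) (Susp.pt x0), Continuous s ∧
        ∀ l : List X,
          s (James.mk x0 l) = (l.map (sOne x0)).foldl lm (Path.refl (Susp.pt x0)) :=
  sSeq_compatible_invariant_general x0 lm hlm hre
end

section
/- For n = 2: let X be an H-space (A₂-space). If the retraction r : J(X) → X is an H-map (A₂-map), then X admits an A₃-structure, i.e., its multiplication is homotopy associative. -/
open scoped unitInterval
/-! Restrict the homotopy `r ∘ mul ≃ μ ∘ (r × r)` along `(a, b, c) ↦ ([a], [b, c])`: on the left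
it gives `r [a, b, c] = (a b) c`, on the right `r [a] · r [b, c] = a (b c)`. -/

theorem Homotopic.comp_continuous {A B Z : Type*} [TopologicalSpace A] [TopologicalSpace B]
    [TopologicalSpace Z] {f g : A → Z} (h : Homotopic f g) {φ : B → A} (hφ : Continuous φ) :
    Homotopic (f ∘ φ) (g ∘ φ) := by
  obtain ⟨H, hHc, h0, h1⟩ := h
  exact ⟨fun q => H (q.1, φ q.2), by fun_prop, fun b => h0 (φ b), fun b => h1 (φ b)⟩

namespace James

variable {X : Type u} (x0 : X)

@[simp]
theorem mul_mk (l l' : List X) : mul (mk x0 l) (mk x0 l') = mk x0 (l ++ l') := rfl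

variable [TopologicalSpace X]

theorem continuous_mk : Continuous (mk x0) := continuous_quotient_mk'

theorem continuous_mk_singleton_mk_pair :
    Continuous fun p : X × X × X => (mk x0 [p.1], mk x0 [p.2.1, p.2.2]) := by
  have := List.continuous_cons (α := X)
  have := continuous_mk x0
  fun_prop

end James

theorem retraction_Hmap_implies_assoc_general {X : Type u} [TopologicalSpace X] (x0 : X)
    (μ : X → X → X)
    (hl : ∀ x, μ x0 x = x)
    (r : James x0 → X)
    (hrdef : ∀ l : List X, r (James.mk x0 l) = l.foldl μ x0)
    (hH : Homotopic (fun p : James x0 × James x0 => r (James.mul p.1 p.2))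
      (fun p : James x0 × James x0 => μ (r p.1) (r p.2))) :
    Homotopic (fun p : X × X × X => μ (μ p.1 p.2.1) p.2.2)
      (fun p : X × X × X => μ p.1 (μ p.2.1 p.2.2)) := by
  have key := hH.comp_continuous (James.continuous_mk_singleton_mk_pair x0)
  convert key using 1 <;> funext p <;> simp [hrdef, hl]

/-- case `n = 2`: if the retraction `r : J(X) → X` of an H-space is an
H-map, then the multiplication of `X` is homotopy associative (i.e. `X` admits an
`A₃`-structure). -/
theorem retraction_Hmap_implies_assoc {X : Type u} [TopologicalSpace X] (x0 : X)
    (μ : X → X → X) (hμ : Continuous fun p : X × X => μ p.1 p.2)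
    (hl : ∀ x, μ x0 x = x) (hr : ∀ x, μ x x0 = x)
    (r : James x0 → X) (hrc : Continuous r)
    (hrdef : ∀ l : List X, r (James.mk x0 l) = l.foldl μ x0)
    (hH : Homotopic (fun p : James x0 × James x0 => r (James.mul p.1 p.2))
      (fun p : James x0 × James x0 => μ (r p.1) (r p.2))) :
    Homotopic (fun p : X × X × X => μ (μ p.1 p.2.1) p.2.2)
      (fun p : X × X × X => μ p.1 (μ p.2.1 p.2.2)) :=
  retraction_Hmap_implies_assoc_general x0 μ hl r hrdef hH
end
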